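/- Let n ≥ 3 be an odd integer, ρ = exp(2πi/n), and a, b ∈ ℂ with (a, b) ≠ (0, 0). If a·ρ^{−k} + b·ρ^{k(n−1)/2} ∈ ℝ for every k ∈ {0,…,n−1}, then n = 3. -/
import Mathlib

open ComplexConjugate Finset

/-- **Reality of `a·v_{n−1} + b·v_{(n−1)/2}` forces `n = 3` for odd `n`.**
If `n ≥ 3` is odd, `(a, b) ≠ (0, 0)`, and `a ρ^{−k} + b ρ^{k(n−1)/2}` is real for every
`k ∈ {0, …, n−1}`, then `n = 3`. -/
theorem real_combination_implies_n_eq_three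
    (n : ℕ) (hn : 3 ≤ n) (hodd : Odd n)
    (ρ : ℂ) (hρ : ρ = Complex.exp (2 * Real.pi * Complex.I / n))
    (a b : ℂ) (hab : (a, b) ≠ (0, 0))
    (h : ∀ k : ℕ, k < n → (a * ρ⁻¹ ^ k + b * ρ ^ (k * ((n - 1) / 2))).im = 0) :
    n = 3 := by
  by_contra hne
  have hn5 : 5 ≤ n := by
    rcases hodd with ⟨t, ht⟩; omega
  set m := (n - 1) / 2 with hmdef
  have hm : 2 * m + 1 = n := by
    rcases hodd with ⟨t, ht⟩; omega
  have hn0 : n ≠ 0 := by omega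
  have hprim : IsPrimitiveRoot ρ n := by
    rw [hρ]; exact Complex.isPrimitiveRoot_exp n hn0
  have hρ0 : ρ ≠ 0 := hprim.ne_zero hn0
  have hρn : ρ ^ n = 1 := hprim.pow_eq_one
  have hconj : conj ρ = ρ⁻¹ := by
    rw [hρ, ← Complex.exp_conj, ← Complex.exp_neg]
    congr 1
    simp [map_div₀, Complex.conj_I, map_ofNat]
    ring
  -- sum of characters vanishes for nontrivial character
  have S : ∀ c : ℤ, ¬ ((n:ℤ) ∣ c) → ∑ k ∈ Finset.range n, ρ ^ (c * (k:ℤ)) = 0 := by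
    intro c hc
    have h1 : ρ ^ c ≠ 1 := fun hh => hc ((hprim.zpow_eq_one_iff_dvd c).mp hh)
    have h2 : (ρ ^ c) ^ n = 1 := by
      rw [← zpow_natCast (ρ ^ c) n, ← zpow_mul, mul_comm, zpow_mul, zpow_natCast, hρn, one_zpow]
    calc ∑ k ∈ Finset.range n, ρ ^ (c * (k:ℤ))
        = ∑ k ∈ Finset.range n, (ρ ^ c) ^ k := by
          refine Finset.sum_congr rfl fun k _ => ?_
          rw [← zpow_natCast (ρ ^ c) k, ← zpow_mul]
      _ = ((ρ ^ c) ^ n - 1) / (ρ ^ c - 1) := geom_sum_eq h1 n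
      _ = 0 := by rw [h2]; simp
  have nondvd : ∀ c : ℤ, 0 < c → c < n → ¬ ((n:ℤ) ∣ c) := by
    intro c h1 h2 hd
    have := Int.le_of_dvd h1 hd
    omega
  have hinvpow : ∀ j : ℕ, ρ⁻¹ ^ j = ρ ^ (-(j:ℤ)) := fun j => by
    rw [inv_pow, ← zpow_natCast, ← zpow_neg]
  have key : ∀ k : ℕ, k < n →
      conj a * ρ ^ ((k:ℤ)) + conj b * ρ ^ (-((k:ℤ) * m)) =
      a * ρ ^ (-(k:ℤ)) + b * ρ ^ ((k:ℤ) * m) := by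
    intro k hk
    have hz := (Complex.conj_eq_iff_im).mpr (h k hk)
    rw [map_add, map_mul, map_mul, map_pow, map_pow, map_inv₀, hconj, inv_inv] at hz
    rw [hinvpow, hinvpow, ← zpow_natCast ρ k, ← zpow_natCast ρ (k * m)] at hz
    push_cast at hz
    convert hz using 3
  have hca : (m:ℤ) = ((n:ℤ) - 1) / 2 := by omega
  -- Step A : a = 0
  have ha : a = 0 := by
    have e1 : ∑ k ∈ Finset.range n,
        (conj a * ρ ^ ((k:ℤ)) + conj b * ρ ^ (-((k:ℤ) * m))) * ρ ^ ((k:ℤ))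
        = ∑ k ∈ Finset.range n,
        (a * ρ ^ (-(k:ℤ)) + b * ρ ^ ((k:ℤ) * m)) * ρ ^ ((k:ℤ)) :=
      Finset.sum_congr rfl fun k hk => by rw [key k (Finset.mem_range.mp hk)]
    have lhs : ∑ k ∈ Finset.range n,
        (conj a * ρ ^ ((k:ℤ)) + conj b * ρ ^ (-((k:ℤ) * m))) * ρ ^ ((k:ℤ))
        = conj a * ∑ k ∈ Finset.range n, ρ ^ ((2:ℤ) * k)
          + conj b * ∑ k ∈ Finset.range n, ρ ^ ((1 - (m:ℤ)) * k) := by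
      rw [Finset.mul_sum, Finset.mul_sum, ← Finset.sum_add_distrib]
      refine Finset.sum_congr rfl fun k _ => ?_
      rw [add_mul, mul_assoc, mul_assoc, ← zpow_add₀ hρ0, ← zpow_add₀ hρ0,
        show (k:ℤ) + k = 2 * k by ring, show -((k:ℤ) * m) + k = (1 - (m:ℤ)) * k by ring]
    have rhs : ∑ k ∈ Finset.range n,
        (a * ρ ^ (-(k:ℤ)) + b * ρ ^ ((k:ℤ) * m)) * ρ ^ ((k:ℤ))
        = a * n + b * ∑ k ∈ Finset.range n, ρ ^ (((m:ℤ) + 1) * k) := by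
      have hterm : ∀ k ∈ Finset.range n,
          (a * ρ ^ (-(k:ℤ)) + b * ρ ^ ((k:ℤ) * m)) * ρ ^ ((k:ℤ))
          = a + b * ρ ^ (((m:ℤ) + 1) * k) := by
        intro k _
        rw [add_mul, mul_assoc, mul_assoc, ← zpow_add₀ hρ0, ← zpow_add₀ hρ0,
          show -(k:ℤ) + k = 0 by ring, show (k:ℤ) * m + k = ((m:ℤ) + 1) * k by ring, zpow_zero,
          mul_one]
      rw [Finset.sum_congr rfl hterm, Finset.sum_add_distrib, Finset.sum_const,
        Finset.card_range, nsmul_eq_mul, mul_comm (n:ℂ) a, ← Finset.mul_sum]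
    have hS2 : ∑ k ∈ Finset.range n, ρ ^ ((2:ℤ) * k) = 0 :=
      S 2 (nondvd 2 (by norm_num) (by omega))
    have hS1m : ∑ k ∈ Finset.range n, ρ ^ ((1 - (m:ℤ)) * k) = 0 := by
      refine S (1 - m) fun hd => ?_
      have hd' : (n:ℤ) ∣ ((m:ℤ) - 1) := by
        rw [show ((m:ℤ) - 1) = -(1 - m) by ring]; exact hd.neg_right
      exact nondvd ((m:ℤ) - 1) (by omega) (by omega) hd'
    have hSm1 : ∑ k ∈ Finset.range n, ρ ^ (((m:ℤ) + 1) * k) = 0 :=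
      S ((m:ℤ) + 1) (nondvd _ (by omega) (by omega))
    rw [lhs, rhs, hS2, hS1m, hSm1] at e1
    simp only [mul_zero, add_zero, zero_add] at e1
    have : a * n = 0 := e1.symm
    rcases mul_eq_zero.mp this with h' | h'
    · exact h'
    · exact absurd h' (Nat.cast_ne_zero.mpr hn0)
  -- Step B : b = 0
  have hb : b = 0 := by
    have e1 : ∑ k ∈ Finset.range n,
        (conj a * ρ ^ ((k:ℤ)) + conj b * ρ ^ (-((k:ℤ) * m))) * ρ ^ ((k:ℤ) * m)
        = ∑ k ∈ Finset.range n,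
        (a * ρ ^ (-(k:ℤ)) + b * ρ ^ ((k:ℤ) * m)) * ρ ^ ((k:ℤ) * m) :=
      Finset.sum_congr rfl fun k hk => by rw [key k (Finset.mem_range.mp hk)]
    have lhs : ∑ k ∈ Finset.range n,
        (conj a * ρ ^ ((k:ℤ)) + conj b * ρ ^ (-((k:ℤ) * m))) * ρ ^ ((k:ℤ) * m)
        = conj a * ∑ k ∈ Finset.range n, ρ ^ (((m:ℤ) + 1) * k) + conj b * n := by
      have hterm : ∀ k ∈ Finset.range n,
          (conj a * ρ ^ ((k:ℤ)) + conj b * ρ ^ (-((k:ℤ) * m))) * ρ ^ ((k:ℤ) * m)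
          = conj a * ρ ^ (((m:ℤ) + 1) * k) + conj b := by
        intro k _
        rw [add_mul, mul_assoc, mul_assoc, ← zpow_add₀ hρ0, ← zpow_add₀ hρ0,
          show (k:ℤ) + k * m = ((m:ℤ) + 1) * k by ring,
          show -((k:ℤ) * m) + k * m = 0 by ring, zpow_zero, mul_one]
      rw [Finset.sum_congr rfl hterm, Finset.sum_add_distrib, Finset.sum_const,
        Finset.card_range, nsmul_eq_mul, mul_comm (n:ℂ) (conj b), ← Finset.mul_sum]
    have rhs : ∑ k ∈ Finset.range n,
        (a * ρ ^ (-(k:ℤ)) + b * ρ ^ ((k:ℤ) * m)) * ρ ^ ((k:ℤ) * m)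
        = a * ∑ k ∈ Finset.range n, ρ ^ (((m:ℤ) - 1) * k)
          + b * ∑ k ∈ Finset.range n, ρ ^ ((2 * (m:ℤ)) * k) := by
      rw [Finset.mul_sum, Finset.mul_sum, ← Finset.sum_add_distrib]
      refine Finset.sum_congr rfl fun k _ => ?_
      rw [add_mul, mul_assoc, mul_assoc, ← zpow_add₀ hρ0, ← zpow_add₀ hρ0,
        show -(k:ℤ) + k * m = ((m:ℤ) - 1) * k by ring,
        show (k:ℤ) * m + k * m = (2 * (m:ℤ)) * k by ring]
    have hSm1 : ∑ k ∈ Finset.range n, ρ ^ (((m:ℤ) + 1) * k) = 0 :=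
      S ((m:ℤ) + 1) (nondvd _ (by omega) (by omega))
    have hSm1' : ∑ k ∈ Finset.range n, ρ ^ (((m:ℤ) - 1) * k) = 0 :=
      S ((m:ℤ) - 1) (nondvd _ (by omega) (by omega))
    have hS2m : ∑ k ∈ Finset.range n, ρ ^ ((2 * (m:ℤ)) * k) = 0 :=
      S (2 * (m:ℤ)) (nondvd _ (by omega) (by omega))
    rw [lhs, rhs, hSm1, hSm1', hS2m] at e1
    simp only [mul_zero, add_zero, zero_add] at e1
    rcases mul_eq_zero.mp e1 with h' | h'
    · simpa using h'
    · exact absurd h' (Nat.cast_ne_zero.mpr hn0)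
  exact hab (by rw [ha, hb])
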